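/- For every CSP instance Q and every nice tree decomposition T of its constraint graph, the polytope P(Q) is integral: every vertex of P(Q) is a 0/1 vector, i.e., P(Q) is the convex hull of its integral points. -/

import Mathlib

/-! Common definitions: CSP instances, configurations, nice tree decompositions,
and the polytopes from Kolman–Koutecký. -/

/-- A constraint with scope `scope`; its satisfaction depends only on the
coordinates in the scope (it is a relation on the domains of the scope). -/
structure CSPConstraint (n : ℕ) where
  scope : Finset (Fin n)
  sat : (Fin n → ℝ) → Prop
  sat_congr : ∀ z z' : Fin n → ℝ, (∀ v ∈ scope, z v = z' v) → sat z → sat z'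

/-- A CSP instance: finite real domains, hard constraints and soft constraints. -/
structure CSPInstance (n : ℕ) where
  dom : Fin n → Finset ℝ
  hard : List (CSPConstraint n)
  soft : List (CSPConstraint n)

variable {n : ℕ}

/-- The list of all constraints (hard and soft). -/
def consList (Q : CSPInstance n) : List (CSPConstraint n) := Q.hard ++ Q.soft

/-- A feasible assignment: values in the domains, satisfying all hard constraints. -/
def Feasible (Q : CSPInstance n) (z : Fin n → ℝ) : Prop :=
  (∀ v, z v ∈ Q.dom v) ∧ ∀ C ∈ Q.hard, C.sat z

-- Configurations of a set `W` of variables: partial assignments (with `none`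
-- playing the role of the symbol `λ`) defined exactly on `W`.
open Classical in
noncomputable def configs (Q : CSPInstance n) (W : Finset (Fin n)) :
    Finset (Fin n → Option ℝ) :=
  (Fintype.piFinset fun v =>
      if v ∈ W then (Q.dom v).image some else ({none} : Finset (Option ℝ))).filter
    (fun K => ∀ C ∈ Q.hard, C.scope ⊆ W → C.sat (fun v => (K v).getD 0))

/-- Restriction `K↾_W` of a configuration: coordinates outside `W` are set to `λ`. -/
def restrictCfg (K : Fin n → Option ℝ) (W : Finset (Fin n)) : Fin n → Option ℝ :=
  fun v => if v ∈ W then K v else none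

/-- A (rooted) nice tree: leaves, introduce nodes, forget nodes and join nodes. -/
inductive NiceTree (n : ℕ) : Type
  | leaf (v : Fin n) : NiceTree n
  | introduce (v : Fin n) (t : NiceTree n) : NiceTree n
  | forget (v : Fin n) (t : NiceTree n) : NiceTree n
  | join (t₁ t₂ : NiceTree n) : NiceTree n

namespace NiceTree

/-- The bag of the root node of a nice tree. -/
def bag : NiceTree n → Finset (Fin n)
  | leaf v => {v}
  | introduce v t => insert v (bag t)
  | forget v t => (bag t).erase v
  | join t₁ _ => bag t₁

/-- All vertices appearing in bags of the tree. -/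
def verts : NiceTree n → Finset (Fin n)
  | leaf v => {v}
  | introduce v t => insert v (verts t)
  | forget _ t => verts t
  | join t₁ t₂ => verts t₁ ∪ verts t₂

/-- Number of nodes of the tree. -/
def size : NiceTree n → ℕ
  | leaf _ => 1
  | introduce _ t => size t + 1
  | forget _ t => size t + 1
  | join t₁ t₂ => size t₁ + size t₂ + 1

/-- Structural validity of a nice tree (in particular, the connectivity
condition of tree decompositions: an introduced vertex does not occur below,
and vertices shared by the two subtrees of a join lie in its bag). -/
def valid : NiceTree n → Prop
  | leaf _ => True
  | introduce v t => v ∉ verts t ∧ valid t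
  | forget v t => v ∈ bag t ∧ valid t
  | join t₁ t₂ => bag t₁ = bag t₂ ∧ verts t₁ ∩ verts t₂ ⊆ bag t₁ ∧ valid t₁ ∧ valid t₂

/-- `isSubtree s t`: `s` is a node (subtree) of `t`. -/
def isSubtree (s : NiceTree n) : NiceTree n → Prop
  | leaf v => s = leaf v
  | introduce v t => s = introduce v t ∨ isSubtree s t
  | forget v t => s = forget v t ∨ isSubtree s t
  | join t₁ t₂ => s = join t₁ t₂ ∨ isSubtree s t₁ ∨ isSubtree s t₂

-- The configurations relevant to the subtree: `ℛ(a) = ⋃_{b ∈ T(a)} 𝒦(B(b))`.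
open Classical in
noncomputable def relConfigs (Q : CSPInstance n) : NiceTree n → Finset (Fin n → Option ℝ)
  | leaf v => configs Q {v}
  | introduce v t => configs Q (insert v (bag t)) ∪ relConfigs Q t
  | forget v t => configs Q ((bag t).erase v) ∪ relConfigs Q t
  | join t₁ t₂ => relConfigs Q t₁ ∪ relConfigs Q t₂

end NiceTree

/-- A valid nice tree decomposition for the CSP instance `Q`: every variable is
in some bag and every constraint scope is contained in some bag. -/
def IsNiceTreeDecompCSP (Q : CSPInstance n) (T : NiceTree n) : Prop :=
  T.valid ∧ (∀ v : Fin n, v ∈ T.verts) ∧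
    ∀ C ∈ consList Q, ∃ s : NiceTree n, s.isSubtree T ∧ C.scope ⊆ s.bag

/-- A valid nice tree decomposition of a graph `G`: every vertex is in some bag
and both endpoints of every edge lie in a common bag. -/
def IsNiceTreeDecompGraph (G : SimpleGraph (Fin n)) (T : NiceTree n) : Prop :=
  T.valid ∧ (∀ v : Fin n, v ∈ T.verts) ∧
    ∀ u v : Fin n, G.Adj u v → ∃ s : NiceTree n, s.isSubtree T ∧ u ∈ s.bag ∧ v ∈ s.bag

/-- The constraint graph of a CSP instance. -/
def constraintGraph (Q : CSPInstance n) : SimpleGraph (Fin n) where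
  Adj u v := u ≠ v ∧ ∃ C ∈ consList Q, u ∈ C.scope ∧ v ∈ C.scope
  symm := by
    constructor
    rintro u v ⟨hne, C, hC, hu, hv⟩
    exact ⟨hne.symm, C, hC, hv, hu⟩
  loopless := by
    constructor
    rintro v ⟨hne, -⟩
    exact hne rfl

-- The LP constraints of `P(Q)` relevant to the subtree `t`: bag equations and
-- consistency equations at introduce and forget nodes of `t`.
def RelCons (Q : CSPInstance n) (f : (Fin n → Option ℝ) → ℝ) : NiceTree n → Prop
  | .leaf v => ∑ K ∈ configs Q {v}, f K = 1
  | .introduce v t =>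
      RelCons Q f t ∧ (∑ K ∈ configs Q (insert v t.bag), f K = 1) ∧
      ∀ K ∈ configs Q t.bag,
        ∑ K' ∈ (configs Q (insert v t.bag)).filter
            (fun K' => restrictCfg K' t.bag = K), f K' = f K
  | .forget v t =>
      RelCons Q f t ∧ (∑ K ∈ configs Q (t.bag.erase v), f K = 1) ∧
      ∀ K ∈ configs Q (t.bag.erase v),
        ∑ K' ∈ (configs Q t.bag).filter
            (fun K' => restrictCfg K' (t.bag.erase v) = K), f K' = f K
  | .join t₁ t₂ => RelCons Q f t₁ ∧ RelCons Q f t₂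

/-- All the constraints of `P(Q)` relevant to the subtree `t`, including the
bounds `0 ≤ f(K) ≤ 1` for relevant configurations. -/
def RelevantLP (Q : CSPInstance n) (t : NiceTree n) (f : (Fin n → Option ℝ) → ℝ) : Prop :=
  RelCons Q f t ∧ ∀ K ∈ t.relConfigs Q, 0 ≤ f K ∧ f K ≤ 1

/-- The polytope `P(Q) ⊆ ℝ^{𝒦_ℬ}` (coordinates outside `𝒦_ℬ` are zero). -/
def Ppoly (Q : CSPInstance n) (T : NiceTree n) : Set ((Fin n → Option ℝ) → ℝ) :=
  {f | RelevantLP Q T f ∧ ∀ K, K ∉ T.relConfigs Q → f K = 0}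

/-- Extended feasible assignments `(z, h)`. -/
def ExtAssignments (Q : CSPInstance n) :
    Set ((Fin n → ℝ) × (Fin Q.soft.length → ℝ)) :=
  {p | Feasible Q p.1 ∧ ∀ i : Fin Q.soft.length,
      ((Q.soft.get i).sat p.1 ∧ p.2 i = 1) ∨ (¬ (Q.soft.get i).sat p.1 ∧ p.2 i = 0)}

/-- `CSP(Q)`: the convex hull of all extended feasible assignments. -/
def CSPpolytope (Q : CSPInstance n) : Set ((Fin n → ℝ) × (Fin Q.soft.length → ℝ)) :=
  convexHull ℝ (ExtAssignments Q)

/-- `CSP'(Q)`: the convex hull of all feasible assignments. -/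
def CSPpolytope' (Q : CSPInstance n) : Set (Fin n → ℝ) :=
  convexHull ℝ {z | Feasible Q z}

/-- The `y`-variables of the basic LP: one for each `v ∈ V` and `i ∈ D_v`. -/
abbrev YType (Q : CSPInstance n) := (v : Fin n) → {i : ℝ // i ∈ Q.dom v} → ℝ

/-- The `g`-variables of the basic LP: one for each constraint `C_U ∈ 𝒞 ∪ ℋ`
and each configuration `K ∈ 𝒦(U)`. -/
abbrev GType (Q : CSPInstance n) :=
  (c : Fin (consList Q).length) →
    {K : Fin n → Option ℝ // K ∈ configs Q ((consList Q).get c).scope} → ℝ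

/-- The basic LP (1)–(3). -/
def BasicLP (Q : CSPInstance n) (p : YType Q × GType Q) : Prop :=
  (∀ v : Fin n, ∑ i ∈ (Q.dom v).attach, p.1 v i = 1) ∧
  (∀ c : Fin (consList Q).length, ∀ v ∈ ((consList Q).get c).scope,
    ∀ (i : ℝ) (hi : i ∈ Q.dom v),
      ∑ K ∈ (configs Q ((consList Q).get c).scope).attach.filter
          (fun K => K.1 v = some i), p.2 c K = p.1 v ⟨i, hi⟩) ∧
  (∀ v i, 0 ≤ p.1 v i ∧ p.1 v i ≤ 1) ∧ (∀ c K, 0 ≤ p.2 c K ∧ p.2 c K ≤ 1)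

/-- Integrality (all coordinates in `{0,1}`) of a `(y, g)` vector. -/
def IntegralYG (Q : CSPInstance n) (p : YType Q × GType Q) : Prop :=
  (∀ v i, p.1 v i = 0 ∨ p.1 v i = 1) ∧ ∀ c K, p.2 c K = 0 ∨ p.2 c K = 1

-- The map sending a (feasible) assignment `z` to the `(y, g)` vector of the basic LP.
open Classical in
noncomputable def exMap (Q : CSPInstance n) (z : Fin n → ℝ) : YType Q × GType Q :=
  (fun v i => if z v = i.1 then 1 else 0,
   fun c K => if ∀ u ∈ ((consList Q).get c).scope, K.1 u = some (z u) then 1 else 0)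

/-! A point `f` of `P(Q)` is averaged from 0/1 points by building, bottom-up along the nice tree,
a probability distribution `μ` on assignments of the variables seen so far whose marginal on every
bag `B` is `f` restricted to `𝒦(B)`. At a leaf `μ` is `f` itself, and a forget node keeps `μ`:
its constraint (iii) says exactly that the marginal on the smaller bag is right. At introduce and
join nodes two distributions whose marginals agree on the overlap of their variable sets (the bag
of the child, by the connectivity of the decomposition) are glued into one that is conditionally
independent given that overlap; at an introduce node the second distribution is `f` on the new
bag, whose marginal on the child's bag is correct by (ii). Every assignment in the support of `μ`
restricts to a configuration on every bag, so it defines a 0/1 point of `P(Q)`, and `f` is the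
`μ`-average of these points. -/

open Finset NiceTree

section Assignments

variable {D : Fin n → Finset ℝ}

lemma restrictCfg_restrictCfg {U W : Finset (Fin n)} (h : U ⊆ W) (z : Fin n → Option ℝ) :
    restrictCfg (restrictCfg z W) U = restrictCfg z U := by
  funext v
  by_cases hv : v ∈ U
  · simp [restrictCfg, hv, h hv]
  · simp [restrictCfg, hv]

variable (D) in
noncomputable def assigns (W : Finset (Fin n)) : Finset (Fin n → Option ℝ) :=
  Fintype.piFinset fun v => if v ∈ W then (D v).image some else {none}

lemma mem_assigns {W : Finset (Fin n)} {z : Fin n → Option ℝ} :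
    z ∈ assigns D W ↔ (∀ v ∈ W, ∃ i ∈ D v, z v = some i) ∧ ∀ v ∉ W, z v = none := by
  simp only [assigns, Fintype.mem_piFinset]
  refine ⟨fun h => ⟨fun v hv => ?_, fun v hv => ?_⟩, fun h v => ?_⟩
  · simpa [hv, eq_comm] using h v
  · simpa [hv] using h v
  · by_cases hv : v ∈ W
    · simpa [hv, eq_comm] using h.1 v hv
    · simpa [hv] using h.2 v hv

lemma restrictCfg_mem_assigns {U W : Finset (Fin n)} (h : U ⊆ W) {z : Fin n → Option ℝ}
    (hz : z ∈ assigns D W) : restrictCfg z U ∈ assigns D U := by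
  refine mem_assigns.2 ⟨fun v hv => ?_, fun v hv => by simp [restrictCfg, hv]⟩
  simpa [restrictCfg, hv] using (mem_assigns.1 hz).1 v (h hv)

lemma restrictCfg_eq_self {W : Finset (Fin n)} {z : Fin n → Option ℝ}
    (hz : z ∈ assigns D W) : restrictCfg z W = z := by
  funext v
  by_cases hv : v ∈ W
  · simp [restrictCfg, hv]
  · simp [restrictCfg, hv, (mem_assigns.1 hz).2 v hv]

lemma piecewise_mem_assigns {W₁ W₂ : Finset (Fin n)} {z₁ z₂ : Fin n → Option ℝ}
    (hz₁ : z₁ ∈ assigns D W₁) (hz₂ : z₂ ∈ assigns D W₂) :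
    W₁.piecewise z₁ z₂ ∈ assigns D (W₁ ∪ W₂) := by
  rw [mem_assigns] at *
  refine ⟨fun v hv => ?_, fun v hv => ?_⟩
  · by_cases hv₁ : v ∈ W₁
    · simpa [hv₁] using hz₁.1 v hv₁
    · simpa [hv₁] using hz₂.1 v ((mem_union.1 hv).resolve_left hv₁)
  · simp only [mem_union, not_or] at hv
    simpa [hv.1] using hz₂.2 v hv.2

lemma mem_range_restrictCfg_iff {U : Finset (Fin n)} {K : Fin n → Option ℝ}
    (hK : K ∈ assigns D U) (z : Fin n → Option ℝ) :
    K ∈ Set.range (restrictCfg z) ↔ restrictCfg z U = K := by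
  refine ⟨?_, fun h => ⟨U, h⟩⟩
  rintro ⟨W, rfl⟩
  funext v
  by_cases hv : v ∈ U
  · obtain ⟨i, -, hi⟩ := (mem_assigns.1 hK).1 v hv
    have hvW : v ∈ W := by
      by_contra hvW
      simp [restrictCfg, hvW] at hi
    simp [restrictCfg, hv, hvW]
  · rw [(mem_assigns.1 hK).2 v hv]
    simp [restrictCfg, hv]

end Assignments

section Marginals

variable {D : Fin n → Finset ℝ} {U V W : Finset (Fin n)} {μ ν : (Fin n → Option ℝ) → ℝ}

variable (D) in
open Classical in
noncomputable def marginal (W U : Finset (Fin n)) (μ : (Fin n → Option ℝ) → ℝ)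
    (K : Fin n → Option ℝ) : ℝ :=
  ∑ z ∈ (assigns D W).filter (fun z => restrictCfg z U = K), μ z

lemma le_marginal (hμ : ∀ z, 0 ≤ μ z) {z : Fin n → Option ℝ} (hz : z ∈ assigns D W) :
    μ z ≤ marginal D W U μ (restrictCfg z U) :=
  single_le_sum (fun z _ => hμ z) (mem_filter.2 ⟨hz, rfl⟩)

lemma marginal_congr (h : ∀ z ∈ assigns D W, μ z = ν z) (K : Fin n → Option ℝ) :
    marginal D W U μ K = marginal D W U ν K :=
  sum_congr rfl fun z hz => h z (mem_filter.1 hz).1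

lemma marginal_self {K : Fin n → Option ℝ} (hK : K ∈ assigns D W) :
    marginal D W W μ K = μ K := by
  classical
  unfold marginal
  refine sum_eq_single_of_mem K (mem_filter.2 ⟨hK, restrictCfg_eq_self hK⟩) fun z hz hne => ?_
  exact absurd ((restrictCfg_eq_self (mem_filter.1 hz).1).symm.trans (mem_filter.1 hz).2) hne

lemma marginal_eq_sum_ite (K : Fin n → Option ℝ) :
    marginal D W U μ K = ∑ z ∈ assigns D W, μ z * if restrictCfg z U = K then 1 else 0 := by
  classical
  simp only [marginal, mul_ite, mul_one, mul_zero, sum_ite, sum_const_zero, add_zero]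

lemma marginal_marginal (hUV : U ⊆ V) (hVW : V ⊆ W) (K : Fin n → Option ℝ) :
    marginal D V U (marginal D W V μ) K = marginal D W U μ K := by
  classical
  unfold marginal
  rw [sum_comm' (t' := (assigns D W).filter fun z => restrictCfg z U = K)
    (s' := fun z => {restrictCfg z V})]
  · simp
  · intro y z
    simp only [mem_filter, mem_singleton]
    constructor
    · rintro ⟨⟨-, hyK⟩, hz, rfl⟩
      exact ⟨rfl, hz, by rwa [restrictCfg_restrictCfg hUV] at hyK⟩
    · rintro ⟨rfl, hz, hzK⟩
      exact ⟨⟨restrictCfg_mem_assigns hVW hz, by rwa [restrictCfg_restrictCfg hUV]⟩, hz, rfl⟩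

lemma sum_marginal (hUW : U ⊆ W) :
    ∑ K ∈ assigns D U, marginal D W U μ K = ∑ z ∈ assigns D W, μ z :=
  sum_fiberwise_of_maps_to (fun _ hz => restrictCfg_mem_assigns hUW hz) μ

end Marginals

section Glue

variable {D : Fin n → Finset ℝ} {W₁ W₂ B : Finset (Fin n)} {m μ₁ μ₂ : (Fin n → Option ℝ) → ℝ}

/-- The coupling of `μ₁` (on `W₁`) and `μ₂` (on `W₂`) that makes them conditionally independent
given their common marginal `m` on `B = W₁ ∩ W₂`. -/
noncomputable def glue (W₁ W₂ B : Finset (Fin n)) (m μ₁ μ₂ : (Fin n → Option ℝ) → ℝ) :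
    (Fin n → Option ℝ) → ℝ :=
  fun z => μ₁ (restrictCfg z W₁) * μ₂ (restrictCfg z W₂) / m (restrictCfg z B)

lemma glue_comm : glue W₁ W₂ B m μ₁ μ₂ = glue W₂ W₁ B m μ₂ μ₁ := by
  funext z
  simp only [glue, mul_comm]

lemma glue_nonneg (hμ₁ : ∀ z, 0 ≤ μ₁ z) (hμ₂ : ∀ z, 0 ≤ μ₂ z) (hm : ∀ K, 0 ≤ m K)
    (z : Fin n → Option ℝ) : 0 ≤ glue W₁ W₂ B m μ₁ μ₂ z :=
  div_nonneg (mul_nonneg (hμ₁ _) (hμ₂ _)) (hm _)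

open Classical in
lemma sum_fiber_union (hB : W₁ ∩ W₂ = B) {z₁ : Fin n → Option ℝ} (hz₁ : z₁ ∈ assigns D W₁)
    (g : (Fin n → Option ℝ) → ℝ) :
    ∑ z ∈ (assigns D (W₁ ∪ W₂)).filter (fun z => restrictCfg z W₁ = z₁), g (restrictCfg z W₂)
      = ∑ z₂ ∈ (assigns D W₂).filter (fun z₂ => restrictCfg z₂ B = restrictCfg z₁ B), g z₂ := by
  subst hB
  refine sum_nbij' (fun z => restrictCfg z W₂) (fun z₂ => W₁.piecewise z₁ z₂) ?_ ?_ ?_ ?_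
    fun _ _ => rfl
  · intro z hz
    obtain ⟨hzW, rfl⟩ := mem_filter.1 hz
    refine mem_filter.2 ⟨restrictCfg_mem_assigns subset_union_right hzW, ?_⟩
    rw [restrictCfg_restrictCfg inter_subset_right, restrictCfg_restrictCfg inter_subset_left]
  · intro z₂ hz₂
    refine mem_filter.2 ⟨piecewise_mem_assigns hz₁ (mem_filter.1 hz₂).1, funext fun v => ?_⟩
    by_cases hv : v ∈ W₁
    · simp [restrictCfg, hv]
    · simp [restrictCfg, hv, (mem_assigns.1 hz₁).2 v hv]
  · intro z hz
    obtain ⟨hzW, rfl⟩ := mem_filter.1 hz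
    funext v
    by_cases hv₁ : v ∈ W₁
    · simp [restrictCfg, hv₁]
    by_cases hv₂ : v ∈ W₂
    · simp [restrictCfg, hv₁, hv₂]
    · simp [restrictCfg, hv₁, hv₂, (mem_assigns.1 hzW).2 v (by simp [hv₁, hv₂])]
  · intro z₂ hz₂
    obtain ⟨hz₂, hagree⟩ := mem_filter.1 hz₂
    funext v
    by_cases hv₂ : v ∈ W₂
    · by_cases hv₁ : v ∈ W₁
      · simpa [restrictCfg, hv₁, hv₂] using (congrFun hagree v).symm
      · simp [restrictCfg, hv₁, hv₂]
    · simp [restrictCfg, hv₂, (mem_assigns.1 hz₂).2 v hv₂]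

lemma marginal_glue_left (hB : W₁ ∩ W₂ = B) (hμ₁ : ∀ z, 0 ≤ μ₁ z)
    (hm₁ : ∀ K ∈ assigns D B, marginal D W₁ B μ₁ K = m K)
    (hm₂ : ∀ K ∈ assigns D B, marginal D W₂ B μ₂ K = m K)
    {z₁ : Fin n → Option ℝ} (hz₁ : z₁ ∈ assigns D W₁) :
    marginal D (W₁ ∪ W₂) W₁ (glue W₁ W₂ B m μ₁ μ₂) z₁ = μ₁ z₁ := by
  classical
  have hBW₁ : B ⊆ W₁ := hB ▸ inter_subset_left
  have hK : restrictCfg z₁ B ∈ assigns D B := restrictCfg_mem_assigns hBW₁ hz₁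
  calc marginal D (W₁ ∪ W₂) W₁ (glue W₁ W₂ B m μ₁ μ₂) z₁
      = ∑ z ∈ (assigns D (W₁ ∪ W₂)).filter (fun z => restrictCfg z W₁ = z₁),
          μ₁ z₁ * μ₂ (restrictCfg z W₂) / m (restrictCfg z₁ B) := by
        refine sum_congr rfl fun z hz => ?_
        rw [glue, ← restrictCfg_restrictCfg hBW₁ z, (mem_filter.1 hz).2]
    _ = μ₁ z₁ * marginal D W₂ B μ₂ (restrictCfg z₁ B) / m (restrictCfg z₁ B) := by
        rw [sum_fiber_union hB hz₁ fun z₂ => μ₁ z₁ * μ₂ z₂ / m (restrictCfg z₁ B), marginal,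
          mul_sum, sum_div]
    _ = μ₁ z₁ := by
        rw [hm₂ _ hK]
        rcases eq_or_ne (m (restrictCfg z₁ B)) 0 with h0 | h0
        · -- `x / 0 = 0`, and `μ₁ z₁` is bounded by its marginal `m (restrictCfg z₁ B) = 0`
          have : μ₁ z₁ ≤ 0 := h0 ▸ hm₁ _ hK ▸ le_marginal hμ₁ hz₁
          simp [h0, le_antisymm this (hμ₁ z₁)]
        · field_simp

lemma marginal_glue_right (hB : W₁ ∩ W₂ = B) (hμ₂ : ∀ z, 0 ≤ μ₂ z)
    (hm₁ : ∀ K ∈ assigns D B, marginal D W₁ B μ₁ K = m K)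
    (hm₂ : ∀ K ∈ assigns D B, marginal D W₂ B μ₂ K = m K)
    {z₂ : Fin n → Option ℝ} (hz₂ : z₂ ∈ assigns D W₂) :
    marginal D (W₁ ∪ W₂) W₂ (glue W₁ W₂ B m μ₁ μ₂) z₂ = μ₂ z₂ := by
  rw [glue_comm, union_comm]
  exact marginal_glue_left (by rwa [inter_comm]) hμ₂ hm₂ hm₁ hz₂

end Glue

section Configurations

variable {Q : CSPInstance n} {U W : Finset (Fin n)}

lemma mem_configs {K : Fin n → Option ℝ} :
    K ∈ configs Q W ↔ K ∈ assigns Q.dom W ∧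
      ∀ C ∈ Q.hard, C.scope ⊆ W → C.sat fun v => (K v).getD 0 := by
  simp [configs, assigns]

lemma configs_subset_assigns : configs Q W ⊆ assigns Q.dom W :=
  fun _ hK => (mem_configs.1 hK).1

lemma restrictCfg_mem_configs (h : U ⊆ W) {K : Fin n → Option ℝ} (hK : K ∈ configs Q W) :
    restrictCfg K U ∈ configs Q U := by
  rw [mem_configs] at hK ⊢
  refine ⟨restrictCfg_mem_assigns h hK.1, fun C hC hCU => ?_⟩
  refine C.sat_congr _ _ (fun v hv => ?_) (hK.2 C hC (hCU.trans h))
  simp [restrictCfg, hCU hv]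

lemma marginal_indicator_configs (hUW : U ⊆ W) {f : (Fin n → Option ℝ) → ℝ}
    (hf : ∀ K ∈ configs Q U,
      ∑ K' ∈ (configs Q W).filter (fun K' => restrictCfg K' U = K), f K' = f K)
    (K : Fin n → Option ℝ) :
    marginal Q.dom W U ((configs Q W : Set (Fin n → Option ℝ)).indicator f) K
      = (configs Q U : Set (Fin n → Option ℝ)).indicator f K := by
  classical
  by_cases hK : K ∈ configs Q U
  · rw [Set.indicator_of_mem (mem_coe.2 hK), ← hf K hK, marginal,
      ← sum_indicator_subset _ (filter_subset_filter _ configs_subset_assigns)]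
    refine sum_congr rfl fun z hz => ?_
    simp only [Set.indicator_apply, mem_coe, mem_filter, (mem_filter.1 hz).2, and_true]
  · rw [Set.indicator_of_notMem (mt mem_coe.1 hK)]
    refine sum_eq_zero fun z hz => Set.indicator_of_notMem (fun hzW => hK ?_) _
    rw [← (mem_filter.1 hz).2]
    exact restrictCfg_mem_configs hUW hzW

end Configurations

namespace NiceTree

lemma isSubtree_refl : ∀ t : NiceTree n, t.isSubtree t
  | leaf _ => rfl
  | introduce _ _ | forget _ _ | join _ _ => Or.inl rfl

lemma isSubtree_trans {s t u : NiceTree n} (hst : s.isSubtree t) (htu : t.isSubtree u) :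
    s.isSubtree u := by
  induction u with
  | leaf v => exact htu ▸ hst
  | introduce v u ih | forget v u ih =>
    rcases htu with rfl | h
    exacts [hst, Or.inr (ih h)]
  | join u₁ u₂ ih₁ ih₂ =>
    rcases htu with rfl | h | h
    exacts [hst, Or.inr (Or.inl (ih₁ h)), Or.inr (Or.inr (ih₂ h))]

lemma bag_subset_verts : ∀ t : NiceTree n, t.bag ⊆ t.verts
  | leaf _ => Subset.refl _
  | introduce v t => insert_subset_insert v (bag_subset_verts t)
  | forget v t => (erase_subset v _).trans (bag_subset_verts t)
  | join t₁ _ => (bag_subset_verts t₁).trans subset_union_left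

lemma verts_subset_of_isSubtree {s t : NiceTree n} (h : s.isSubtree t) : s.verts ⊆ t.verts := by
  induction t with
  | leaf v => exact h ▸ Subset.refl _
  | introduce v t ih =>
    rcases h with rfl | h
    exacts [Subset.refl _, (ih h).trans (subset_insert _ _)]
  | forget v t ih =>
    rcases h with rfl | h
    exacts [Subset.refl _, ih h]
  | join t₁ t₂ ih₁ ih₂ =>
    rcases h with rfl | h | h
    exacts [Subset.refl _, (ih₁ h).trans subset_union_left, (ih₂ h).trans subset_union_right]

lemma bag_subset_verts_of_isSubtree {s t : NiceTree n} (h : s.isSubtree t) : s.bag ⊆ t.verts :=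
  (bag_subset_verts s).trans (verts_subset_of_isSubtree h)

variable {Q : CSPInstance n}

lemma configs_bag_subset_relConfigs {s t : NiceTree n} (h : s.isSubtree t) :
    configs Q s.bag ⊆ relConfigs Q t := by
  induction t generalizing s with
  | leaf v =>
    obtain rfl : s = leaf v := h
    exact Subset.refl _
  | introduce v t ih | forget v t ih =>
    rcases h with rfl | h
    exacts [subset_union_left, (ih h).trans subset_union_right]
  | join t₁ t₂ ih₁ ih₂ =>
    rcases h with rfl | h | h
    exacts [(ih₁ (isSubtree_refl t₁)).trans subset_union_left, (ih₁ h).trans subset_union_left,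
      (ih₂ h).trans subset_union_right]

lemma exists_of_mem_relConfigs {K : Fin n → Option ℝ} {t : NiceTree n}
    (h : K ∈ relConfigs Q t) : ∃ s : NiceTree n, s.isSubtree t ∧ K ∈ configs Q s.bag := by
  induction t with
  | leaf v => exact ⟨leaf v, rfl, h⟩
  | introduce v t ih | forget v t ih =>
    rcases mem_union.1 h with h | h
    · exact ⟨_, Or.inl rfl, h⟩
    · obtain ⟨s, hs, hK⟩ := ih h
      exact ⟨s, Or.inr hs, hK⟩
  | join t₁ t₂ ih₁ ih₂ =>
    rcases mem_union.1 h with h | h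
    · obtain ⟨s, hs, hK⟩ := ih₁ h
      exact ⟨s, Or.inr (Or.inl hs), hK⟩
    · obtain ⟨s, hs, hK⟩ := ih₂ h
      exact ⟨s, Or.inr (Or.inr hs), hK⟩

end NiceTree

lemma relCons_bag_sum {Q : CSPInstance n} {f : (Fin n → Option ℝ) → ℝ} :
    ∀ {t : NiceTree n}, RelCons Q f t → ∑ K ∈ configs Q t.bag, f K = 1
  | .leaf _, h => h
  | .introduce _ _, h | .forget _ _, h => h.2.1
  | .join t₁ _, h => relCons_bag_sum (t := t₁) h.1

section BagMarginals

variable {Q : CSPInstance n} {f μ : (Fin n → Option ℝ) → ℝ}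

def HasBagMarginals (Q : CSPInstance n) (t : NiceTree n) (f μ : (Fin n → Option ℝ) → ℝ) :
    Prop :=
  (∀ z, 0 ≤ μ z) ∧ ∀ s : NiceTree n, s.isSubtree t → ∀ K ∈ assigns Q.dom s.bag,
    marginal Q.dom t.verts s.bag μ K = (configs Q s.bag : Set (Fin n → Option ℝ)).indicator f K

lemma HasBagMarginals.marginal_of_extension {t : NiceTree n} (h : HasBagMarginals Q t f μ)
    {W : Finset (Fin n)} (hW : t.verts ⊆ W) {μ' : (Fin n → Option ℝ) → ℝ}
    (hμ' : ∀ z ∈ assigns Q.dom t.verts, marginal Q.dom W t.verts μ' z = μ z)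
    {s : NiceTree n} (hs : s.isSubtree t) {K : Fin n → Option ℝ} (hK : K ∈ assigns Q.dom s.bag) :
    marginal Q.dom W s.bag μ' K = (configs Q s.bag : Set (Fin n → Option ℝ)).indicator f K := by
  rw [← marginal_marginal (bag_subset_verts_of_isSubtree hs) hW, marginal_congr hμ',
    h.2 s hs K hK]

lemma indicator_configs_nonneg {s t : NiceTree n} (hs : s.isSubtree t)
    (hf₀ : ∀ K ∈ relConfigs Q t, 0 ≤ f K) (K : Fin n → Option ℝ) :
    0 ≤ (configs Q s.bag : Set (Fin n → Option ℝ)).indicator f K :=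
  Set.indicator_nonneg (fun K hK => hf₀ K (configs_bag_subset_relConfigs hs hK)) K

lemma hasBagMarginals_leaf {v : Fin n} (hf₀ : ∀ K ∈ relConfigs Q (.leaf v), 0 ≤ f K) :
    HasBagMarginals Q (.leaf v) f ((configs Q {v} : Set (Fin n → Option ℝ)).indicator f) := by
  refine ⟨indicator_configs_nonneg (s := .leaf v) (isSubtree_refl _) hf₀, ?_⟩
  rintro s rfl K hK
  exact marginal_self hK

lemma HasBagMarginals.introduce {v : Fin n} {t : NiceTree n} (h : HasBagMarginals Q t f μ)
    (hv : v ∉ t.verts) (hf : RelCons Q f (.introduce v t))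
    (hf₀ : ∀ K ∈ relConfigs Q (.introduce v t), 0 ≤ f K) :
    HasBagMarginals Q (.introduce v t) f
      (glue t.verts (insert v t.bag) t.bag ((configs Q t.bag : Set _).indicator f) μ
        ((configs Q (insert v t.bag) : Set _).indicator f)) := by
  have hB : t.verts ∩ insert v t.bag = t.bag := by
    rw [inter_insert_of_notMem hv, inter_eq_right.2 (bag_subset_verts t)]
  have hW : t.verts ∪ insert v t.bag = (NiceTree.introduce v t).verts := by
    rw [union_insert, union_eq_left.2 (bag_subset_verts t)]
    rfl
  have hm₁ := h.2 t (isSubtree_refl t)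
  have hm₂ : ∀ K ∈ assigns Q.dom t.bag,
      marginal Q.dom (insert v t.bag) t.bag ((configs Q (insert v t.bag) : Set _).indicator f) K
        = (configs Q t.bag : Set _).indicator f K :=
    fun K _ => marginal_indicator_configs (subset_insert v t.bag) hf.2.2 K
  have hm := indicator_configs_nonneg (s := t) (t := .introduce v t) (Or.inr (isSubtree_refl t)) hf₀
  have hμ₂ := indicator_configs_nonneg (s := .introduce v t) (isSubtree_refl _) hf₀
  refine ⟨glue_nonneg h.1 hμ₂ hm, ?_⟩
  rintro s (rfl | hs) K hK <;> rw [← hW]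
  · exact marginal_glue_right hB hμ₂ hm₁ hm₂ hK
  · exact h.marginal_of_extension subset_union_left
      (fun z hz => marginal_glue_left hB h.1 hm₁ hm₂ hz) hs hK

lemma HasBagMarginals.forget {v : Fin n} {t : NiceTree n} (h : HasBagMarginals Q t f μ)
    (hf : RelCons Q f (.forget v t)) : HasBagMarginals Q (.forget v t) f μ := by
  refine ⟨h.1, ?_⟩
  rintro s (rfl | hs) K hK
  · show marginal Q.dom t.verts (t.bag.erase v) μ K = _
    rw [← marginal_marginal (erase_subset v t.bag) (bag_subset_verts t),
      marginal_congr (h.2 t (isSubtree_refl t)),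
      marginal_indicator_configs (erase_subset v _) hf.2.2]
    rfl
  · exact h.2 s hs K hK

lemma HasBagMarginals.join {t₁ t₂ : NiceTree n} {μ₁ μ₂ : (Fin n → Option ℝ) → ℝ}
    (h₁ : HasBagMarginals Q t₁ f μ₁) (h₂ : HasBagMarginals Q t₂ f μ₂) (hbag : t₁.bag = t₂.bag)
    (hint : t₁.verts ∩ t₂.verts ⊆ t₁.bag) (hf₀ : ∀ K ∈ relConfigs Q (.join t₁ t₂), 0 ≤ f K) :
    HasBagMarginals Q (.join t₁ t₂) f
      (glue t₁.verts t₂.verts t₁.bag ((configs Q t₁.bag : Set _).indicator f) μ₁ μ₂) := by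
  have hB : t₁.verts ∩ t₂.verts = t₁.bag :=
    subset_antisymm hint (subset_inter (bag_subset_verts t₁) (hbag ▸ bag_subset_verts t₂))
  have hm₁ := h₁.2 t₁ (isSubtree_refl t₁)
  have hm₂ := hbag ▸ h₂.2 t₂ (isSubtree_refl t₂)
  have hm := indicator_configs_nonneg (s := .join t₁ t₂) (isSubtree_refl _) hf₀
  refine ⟨glue_nonneg h₁.1 h₂.1 hm, ?_⟩
  rintro s (rfl | hs | hs) K hK
  · exact h₁.marginal_of_extension subset_union_left
      (fun z hz => marginal_glue_left hB h₁.1 hm₁ hm₂ hz) (isSubtree_refl t₁) hK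
  · exact h₁.marginal_of_extension subset_union_left
      (fun z hz => marginal_glue_left hB h₁.1 hm₁ hm₂ hz) hs hK
  · exact h₂.marginal_of_extension subset_union_right
      (fun z hz => marginal_glue_right hB h₂.1 hm₁ hm₂ hz) hs hK

theorem exists_hasBagMarginals :
    ∀ {t : NiceTree n}, t.valid → RelCons Q f t → (∀ K ∈ relConfigs Q t, 0 ≤ f K) →
      ∃ μ, HasBagMarginals Q t f μ
  | .leaf _, _, _, hf₀ => ⟨_, hasBagMarginals_leaf hf₀⟩
  | .introduce _ _, ⟨hv, ht⟩, hf, hf₀ =>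
    have ⟨_, h⟩ := exists_hasBagMarginals ht hf.1 fun K hK => hf₀ K (mem_union_right _ hK)
    ⟨_, h.introduce hv hf hf₀⟩
  | .forget _ _, ⟨_, ht⟩, hf, hf₀ =>
    have ⟨_, h⟩ := exists_hasBagMarginals ht hf.1 fun K hK => hf₀ K (mem_union_right _ hK)
    ⟨_, h.forget hf⟩
  | .join _ _, ⟨hbag, hint, ht₁, ht₂⟩, hf, hf₀ =>
    have ⟨_, h₁⟩ := exists_hasBagMarginals ht₁ hf.1 fun K hK => hf₀ K (mem_union_left _ hK)
    have ⟨_, h₂⟩ := exists_hasBagMarginals ht₂ hf.2 fun K hK => hf₀ K (mem_union_right _ hK)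
    ⟨_, h₁.join h₂ hbag hint hf₀⟩

end BagMarginals

section IntegralPoints

variable {Q : CSPInstance n} {T : NiceTree n} {z : Fin n → Option ℝ}

noncomputable def pointOf (Q : CSPInstance n) (T : NiceTree n) (z : Fin n → Option ℝ) :
    (Fin n → Option ℝ) → ℝ :=
  ((relConfigs Q T : Set (Fin n → Option ℝ)) ∩ Set.range (restrictCfg z)).indicator 1

lemma pointOf_apply_of_mem_configs {s : NiceTree n} (hs : s.isSubtree T)
    {K : Fin n → Option ℝ} (hK : K ∈ configs Q s.bag) :
    pointOf Q T z K = if restrictCfg z s.bag = K then 1 else 0 := by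
  simp only [pointOf, Set.indicator_apply, Set.mem_inter_iff, mem_coe,
    configs_bag_subset_relConfigs hs hK, true_and,
    mem_range_restrictCfg_iff (configs_subset_assigns hK), Pi.one_apply]

lemma sum_pointOf_configs {s : NiceTree n} (hs : s.isSubtree T)
    (hz : restrictCfg z s.bag ∈ configs Q s.bag) :
    ∑ K ∈ configs Q s.bag, pointOf Q T z K = 1 := by
  rw [sum_congr rfl fun K hK => pointOf_apply_of_mem_configs hs hK, sum_ite_eq, if_pos hz]

lemma sum_pointOf_fiber {s : NiceTree n} (hs : s.isSubtree T)
    (hz : restrictCfg z s.bag ∈ configs Q s.bag) {U : Finset (Fin n)} (hU : U ⊆ s.bag)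
    (K : Fin n → Option ℝ) :
    ∑ K' ∈ (configs Q s.bag).filter (fun K' => restrictCfg K' U = K), pointOf Q T z K'
      = if restrictCfg z U = K then 1 else 0 := by
  rw [sum_congr rfl fun K' hK' => pointOf_apply_of_mem_configs hs (mem_filter.1 hK').1,
    sum_ite_eq]
  simp [hz, restrictCfg_restrictCfg hU]

lemma relCons_pointOf (hz : ∀ s : NiceTree n, s.isSubtree T → restrictCfg z s.bag ∈ configs Q s.bag)
    {t : NiceTree n} (ht : t.isSubtree T) : RelCons Q (pointOf Q T z) t := by
  induction t with
  | leaf v => exact sum_pointOf_configs (s := .leaf v) ht (hz _ ht)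
  | introduce v t ih =>
    have ht' := isSubtree_trans (t := .introduce v t) (Or.inr (isSubtree_refl t)) ht
    refine ⟨ih ht', sum_pointOf_configs (s := .introduce v t) ht (hz _ ht), fun K hK => ?_⟩
    exact (sum_pointOf_fiber (s := .introduce v t) ht (hz _ ht) (subset_insert v t.bag) K).trans
      (pointOf_apply_of_mem_configs ht' hK).symm
  | forget v t ih =>
    have ht' := isSubtree_trans (t := .forget v t) (Or.inr (isSubtree_refl t)) ht
    refine ⟨ih ht', sum_pointOf_configs (s := .forget v t) ht (hz _ ht), fun K hK => ?_⟩
    exact (sum_pointOf_fiber ht' (hz _ ht') (erase_subset v t.bag) K).trans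
      (pointOf_apply_of_mem_configs (s := .forget v t) ht hK).symm
  | join t₁ t₂ ih₁ ih₂ =>
    exact ⟨ih₁ (isSubtree_trans (t := .join t₁ t₂) (Or.inr (Or.inl (isSubtree_refl t₁))) ht),
      ih₂ (isSubtree_trans (t := .join t₁ t₂) (Or.inr (Or.inr (isSubtree_refl t₂))) ht)⟩

lemma pointOf_mem (hz : ∀ s : NiceTree n, s.isSubtree T → restrictCfg z s.bag ∈ configs Q s.bag) :
    pointOf Q T z ∈ Ppoly Q T ∧ ∀ K, pointOf Q T z K = 0 ∨ pointOf Q T z K = 1 := by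
  have h01 : ∀ K, pointOf Q T z K = 0 ∨ pointOf Q T z K = 1 := fun K => by
    by_cases hK : K ∈ (relConfigs Q T : Set _) ∩ Set.range (restrictCfg z)
    · simp [pointOf, Set.indicator_of_mem hK]
    · simp [pointOf, Set.indicator_of_notMem hK]
  refine ⟨⟨⟨relCons_pointOf hz (isSubtree_refl T), fun K _ => ?_⟩, fun K hK => ?_⟩, h01⟩
  · rcases h01 K with h | h <;> simp [h]
  · exact Set.indicator_of_notMem (fun h => hK h.1) _

end IntegralPoints

namespace HasBagMarginals

variable {Q : CSPInstance n} {T : NiceTree n} {f μ : (Fin n → Option ℝ) → ℝ}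

lemma restrictCfg_mem_configs (h : HasBagMarginals Q T f μ) {z : Fin n → Option ℝ}
    (hz : z ∈ assigns Q.dom T.verts) (hμz : μ z ≠ 0) {s : NiceTree n} (hs : s.isSubtree T) :
    restrictCfg z s.bag ∈ configs Q s.bag := by
  by_contra hK
  have hle := le_marginal (U := s.bag) h.1 hz
  rw [h.2 s hs _ (restrictCfg_mem_assigns (bag_subset_verts_of_isSubtree hs) hz),
    Set.indicator_of_notMem (mt mem_coe.1 hK)] at hle
  exact hμz (le_antisymm hle (h.1 z))

lemma sum_eq_one (h : HasBagMarginals Q T f μ) (hf : RelCons Q f T) :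
    ∑ z ∈ assigns Q.dom T.verts, μ z = 1 := by
  rw [← sum_marginal (bag_subset_verts T), sum_congr rfl (h.2 T (isSubtree_refl T)),
    sum_indicator_subset f configs_subset_assigns, relCons_bag_sum hf]

lemma eq_sum_smul_pointOf (h : HasBagMarginals Q T f μ)
    (hzero : ∀ K, K ∉ relConfigs Q T → f K = 0) :
    f = ∑ z ∈ assigns Q.dom T.verts, μ z • pointOf Q T z := by
  funext K
  simp only [Finset.sum_apply, Pi.smul_apply, smul_eq_mul]
  by_cases hK : K ∈ relConfigs Q T
  · obtain ⟨s, hs, hKs⟩ := exists_of_mem_relConfigs hK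
    simp only [pointOf_apply_of_mem_configs hs hKs]
    rw [← marginal_eq_sum_ite, h.2 s hs K (configs_subset_assigns hKs),
      Set.indicator_of_mem (mem_coe.2 hKs)]
  · rw [hzero K hK]
    simp [pointOf, hK]

end HasBagMarginals

lemma Convex.sum_mem_of_ne_zero {R ι E : Type*} [Field R] [LinearOrder R]
    [IsStrictOrderedRing R] [AddCommGroup E] [Module R E] {s : Set E} (hs : Convex R s)
    {t : Finset ι} {w : ι → R} {p : ι → E} (h₀ : ∀ i ∈ t, 0 ≤ w i)
    (h₁ : ∑ i ∈ t, w i = 1) (hp : ∀ i ∈ t, w i ≠ 0 → p i ∈ s) : ∑ i ∈ t, w i • p i ∈ s := by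
  classical
  rw [← sum_filter_ne_zero] at h₁
  rw [← sum_filter_of_ne (p := fun i => w i ≠ 0) fun i _ hi => left_ne_zero_of_smul hi]
  exact hs.sum_mem (fun i hi => h₀ i (mem_filter.1 hi).1) h₁
    fun i hi => hp i (mem_filter.1 hi).1 (mem_filter.1 hi).2

lemma convex_setOf_relCons (Q : CSPInstance n) (t : NiceTree n) :
    Convex ℝ {f | RelCons Q f t} := by
  intro f hf g hg a b _ _ hab
  simp only [Set.mem_ofPred_eq] at hf hg ⊢
  induction t with
  | leaf v =>
    simp only [RelCons, Pi.add_apply, Pi.smul_apply, smul_eq_mul, sum_add_distrib,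
      ← mul_sum] at hf hg ⊢
    rw [hf, hg, mul_one, mul_one, hab]
  | introduce v t ih | forget v t ih =>
    refine ⟨ih hf.1 hg.1, ?_, fun K hK => ?_⟩ <;>
      simp only [Pi.add_apply, Pi.smul_apply, smul_eq_mul, sum_add_distrib, ← mul_sum]
    · rw [hf.2.1, hg.2.1, mul_one, mul_one, hab]
    · rw [hf.2.2 K hK, hg.2.2 K hK]
  | join t₁ t₂ ih₁ ih₂ => exact ⟨ih₁ hf.1 hg.1, ih₂ hf.2 hg.2⟩

lemma convex_ppoly (Q : CSPInstance n) (T : NiceTree n) : Convex ℝ (Ppoly Q T) := by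
  rintro f ⟨⟨hf, hf01⟩, hf0⟩ g ⟨⟨hg, hg01⟩, hg0⟩ a b ha hb hab
  refine ⟨⟨convex_setOf_relCons Q T hf hg ha hb hab, fun K hK => ?_⟩, fun K hK => ?_⟩
  · exact convex_Icc (0 : ℝ) 1 (hf01 K hK) (hg01 K hK) ha hb hab
  · simp [hf0 K hK, hg0 K hK]

/-- The polytope `P(Q)` is integral: it is the convex hull of
its integral (0/1) points. -/
theorem ppoly_integral (n : ℕ) (Q : CSPInstance n) (T : NiceTree n)
    (hT : IsNiceTreeDecompCSP Q T) :
    Ppoly Q T = convexHull ℝ {f | f ∈ Ppoly Q T ∧ ∀ K, f K = 0 ∨ f K = 1} := by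
  refine subset_antisymm ?_ (convexHull_min (fun f hf => hf.1) (convex_ppoly Q T))
  rintro f ⟨⟨hf, hf01⟩, hzero⟩
  obtain ⟨μ, hμ⟩ := exists_hasBagMarginals hT.1 hf fun K hK => (hf01 K hK).1
  rw [hμ.eq_sum_smul_pointOf hzero]
  refine (convex_convexHull ℝ _).sum_mem_of_ne_zero (fun z _ => hμ.1 z) (hμ.sum_eq_one hf)
    fun z hz hμz => subset_convexHull ℝ _ (pointOf_mem fun s hs => ?_)
  exact hμ.restrictCfg_mem_configs hz hμz hs
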